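/- arXiv:2411.09516 — 2 statements merged into one kernel-verified Lean document; each statement's English description precedes it below -/
import Mathlib

section
/- Let X_1, X_2, ... be i.i.d. random matrices taking values in S_d^{[0,1]} with mean M and variance V = E[(X_1 − M)²], and let α ∈ (0,1). For each even n define the paired sample variance V*_n = (1/n)·((X_1 − X_2)² + ... + (X_{n−1} − X_n)²) and the deviation D_n = log(nd/((n−1)α))/(3n) + sqrt( 2·‖V*_n‖·log(nd/((n−1)α)) / n ) + (sqrt(5/3) + 1)·sqrt( log(nd/((n−1)α)) · log(2nd/α) ) / n. Then sqrt(n)·D_n converges almost surely to sqrt( 2·log(d/α)·‖V‖ ) as n → ∞ along even n. -/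
/-!
Applied entrywise to the i.i.d. pairs `(X_{2j}, X_{2j+1})`, the strong law of large numbers gives
`V*_n → E[(X_0 - X_1)²] / 2 = V` almost surely: expanding around the mean, the cross terms vanish
by independence. On Hermitian matrices the spectral norm is the `L²` operator norm (the spectral
radius of a self-adjoint operator is its norm), hence continuous, so `‖V*_n‖ → ‖V‖`. Finally
`√n · D_n` is the sum of `log(nd/((n-1)α)) / (3√n) → 0`, of `√(2 ‖V*_n‖ log(nd/((n-1)α)))`, which
tends to `√(2 log(d/α) ‖V‖)`, and of a multiple of `√(log(nd/((n-1)α)) · log(2nd/α) / n) → 0`.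
-/

open MeasureTheory ProbabilityTheory Filter Matrix

/-- The largest eigenvalue of a real symmetric matrix. -/
noncomputable def lmax {d : ℕ} (A : Matrix (Fin d) (Fin d) ℝ) : ℝ := sSup (spectrum ℝ A)

/-- The smallest eigenvalue of a real symmetric matrix. -/
noncomputable def lmin {d : ℕ} (A : Matrix (Fin d) (Fin d) ℝ) : ℝ := sInf (spectrum ℝ A)

/-- The spectral norm (largest absolute value of eigenvalues) of a real symmetric matrix. -/
noncomputable def specNorm {d : ℕ} (A : Matrix (Fin d) (Fin d) ℝ) : ℝ := max (lmax A) (-(lmin A))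

/-- The Loewner partial order `A ⪯ B`, i.e. `B - A` is positive semidefinite. -/
def LoewnerLE {d : ℕ} (A B : Matrix (Fin d) (Fin d) ℝ) : Prop := (B - A).PosSemidef

/-- `A ∈ S_d^{[0,1]}`: `A` is symmetric with all eigenvalues in `[0,1]`. -/
def memSd01 {d : ℕ} (A : Matrix (Fin d) (Fin d) ℝ) : Prop := A.PosSemidef ∧ (1 - A).PosSemidef

instance matMS {d : ℕ} : MeasurableSpace (Matrix (Fin d) (Fin d) ℝ) := MeasurableSpace.pi

/-- Entrywise expectation of a random matrix. -/
noncomputable def mIntegral {d : ℕ} {Ω : Type*} [MeasurableSpace Ω] (μ : Measure Ω)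
    (X : Ω → Matrix (Fin d) (Fin d) ℝ) : Matrix (Fin d) (Fin d) ℝ :=
  fun i j => ∫ ω, X ω i j ∂μ

/-- Entrywise conditional expectation of a random matrix given a sub-σ-algebra `m`. -/
noncomputable def mCondExp {d : ℕ} {Ω : Type*} {m0 : MeasurableSpace Ω} (m : MeasurableSpace Ω)
    (μ : @Measure Ω m0) (X : Ω → Matrix (Fin d) (Fin d) ℝ) : Ω → Matrix (Fin d) (Fin d) ℝ :=
  fun ω i j => (μ[fun ω' => X ω' i j | m]) ω

/-- Entrywise integrability of a random matrix. -/
def mIntegrable {d : ℕ} {Ω : Type*} [MeasurableSpace Ω] (μ : Measure Ω)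
    (X : Ω → Matrix (Fin d) (Fin d) ℝ) : Prop :=
  ∀ i j, Integrable (fun ω => X ω i j) μ

/-- Entrywise measurability of a random matrix with respect to a σ-algebra `m`. -/
def mMeasurable {d : ℕ} {Ω : Type*} (m : MeasurableSpace Ω)
    (X : Ω → Matrix (Fin d) (Fin d) ℝ) : Prop :=
  ∀ i j, Measurable[m] (fun ω => X ω i j)

/-- The CGF of a centered standard exponential distribution, `ψ_E(γ) = -log(1-γ) - γ`. -/
noncomputable def psiE (g : ℝ) : ℝ := -Real.log (1 - g) - g

/-- The matrix exponential of a real symmetric matrix. -/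
noncomputable def mexp {d : ℕ} (A : Matrix (Fin d) (Fin d) ℝ) : Matrix (Fin d) (Fin d) ℝ :=
  NormedSpace.exp A

open scoped Matrix.Norms.L2Operator Topology

lemma Matrix.PosSemidef.abs_apply_le {n : Type*} [Fintype n] [DecidableEq n] {A : Matrix n n ℝ}
    (hA : A.PosSemidef) (i j : n) : |A i j| ≤ (A i i + A j j) / 2 := by
  have hsymm : A j i = A i j := by simpa using congrFun (congrFun hA.1 i) j
  have quad (s : ℝ) := hA.dotProduct_mulVec_nonneg (Pi.single i 1 + Pi.single j s)
  have hplus := quad 1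
  have hminus := quad (-1)
  simp [mulVec_add, dotProduct_add, add_dotProduct, mulVec_single, hsymm] at hplus hminus
  rw [abs_le]
  constructor <;> linarith

lemma memSd01.abs_apply_le_one {d : ℕ} {A : Matrix (Fin d) (Fin d) ℝ} (hA : memSd01 A)
    (i j : Fin d) : |A i j| ≤ 1 := by
  have hdiag (k : Fin d) : A k k ≤ 1 := by simpa using hA.2.diag_nonneg (i := k)
  linarith [hA.1.abs_apply_le i j, hdiag i, hdiag j]

lemma Matrix.IsHermitian.spectralRadius_eq_l2_opNNNorm {n : Type*} [Fintype n] [DecidableEq n]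
    {A : Matrix n n ℝ} (hA : A.IsHermitian) : spectralRadius ℝ A = ‖A‖₊ := by
  have hT : IsSelfAdjoint (toEuclideanCLM (n := n) (𝕜 := ℝ) A) := hA.isSelfAdjoint.map _
  rw [spectralRadius, ← AlgEquiv.spectrum_eq (toEuclideanCLM (n := n) (𝕜 := ℝ)) A]
  exact ContinuousLinearMap.spectralRadius_eq_nnnorm _ hT

lemma Matrix.IsHermitian.exists_mem_spectrum_abs_eq_l2_opNorm {n : Type*} [Fintype n]
    [DecidableEq n] [Nonempty n] {A : Matrix n n ℝ} (hA : A.IsHermitian) :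
    ∃ r ∈ spectrum ℝ A, |r| = ‖A‖ := by
  obtain ⟨r, hr, hrA⟩ := spectrum.exists_nnnorm_eq_spectralRadius_of_nonempty
    ⟨_, hA.eigenvalues_mem_spectrum_real (Classical.arbitrary n)⟩
  rw [hA.spectralRadius_eq_l2_opNNNorm, ENNReal.coe_inj] at hrA
  exact ⟨r, hr, congrArg NNReal.toReal hrA⟩

lemma specNorm_eq_l2_opNorm {d : ℕ} {A : Matrix (Fin d) (Fin d) ℝ} (hA : A.IsHermitian) :
    specNorm A = ‖A‖ := by
  rcases Nat.eq_zero_or_pos d with rfl | hd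
  · simp [specNorm, lmax, lmin, spectrum.of_subsingleton, Subsingleton.elim A 0]
  have : Nonempty (Fin d) := ⟨⟨0, hd⟩⟩
  have hle (s : ℝ) (hs : s ∈ spectrum ℝ A) : |s| ≤ ‖A‖ := spectrum.norm_le_norm_of_mem hs
  obtain ⟨r, hr, hrA⟩ := hA.exists_mem_spectrum_abs_eq_l2_opNorm
  refine le_antisymm (max_le ?_ ?_) ?_
  · exact csSup_le ⟨r, hr⟩ fun s hs => (le_abs_self s).trans (hle s hs)
  · exact neg_le.mp (le_csInf ⟨r, hr⟩ fun s hs => neg_le.mp ((neg_le_abs s).trans (hle s hs)))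
  · rw [← hrA]
    rcases abs_cases r with ⟨h, -⟩ | ⟨h, -⟩ <;> rw [h]
    · exact le_max_of_le_left (le_csSup finite_real_spectrum.bddAbove hr)
    · exact le_max_of_le_right (neg_le_neg (csInf_le finite_real_spectrum.bddBelow hr))

lemma Filter.Tendsto.specNorm {ι : Type*} {l : Filter ι} [l.NeBot] {d : ℕ}
    {S : ι → Matrix (Fin d) (Fin d) ℝ} {V : Matrix (Fin d) (Fin d) ℝ} (h : Tendsto S l (𝓝 V))
    (hS : ∀ᶠ i in l, (S i).IsHermitian) : Tendsto (fun i => specNorm (S i)) l (𝓝 (specNorm V)) := by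
  have hV : V.IsHermitian := (isClosed_eq continuous_star continuous_id).mem_of_tendsto h hS
  rw [specNorm_eq_l2_opNorm hV]
  exact h.norm.congr' (hS.mono fun i hi => (specNorm_eq_l2_opNorm hi).symm)

section MatrixIntegral

variable {Ω : Type*} [MeasurableSpace Ω] {μ : Measure Ω} {d : ℕ}
  {X Y : Ω → Matrix (Fin d) (Fin d) ℝ}

instance : BorelSpace (Matrix (Fin d) (Fin d) ℝ) :=
  inferInstanceAs (BorelSpace (Fin d → Fin d → ℝ))

lemma ProbabilityTheory.IdentDistrib.entry {Ω' : Type*} [MeasurableSpace Ω'] {ν : Measure Ω'}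
    {X' : Ω' → Matrix (Fin d) (Fin d) ℝ} (h : IdentDistrib X X' μ ν) (i j : Fin d) :
    IdentDistrib (fun ω => X ω i j) (fun ω => X' ω i j) μ ν :=
  h.comp (u := fun A : Matrix (Fin d) (Fin d) ℝ => A i j) (by fun_prop)

lemma ProbabilityTheory.IdentDistrib.mIntegral_eq {Ω' : Type*} [MeasurableSpace Ω']
    {ν : Measure Ω'} {X' : Ω' → Matrix (Fin d) (Fin d) ℝ} (h : IdentDistrib X X' μ ν) :
    mIntegral μ X = mIntegral ν X' := by
  ext i j
  exact (h.entry i j).integral_eq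

lemma mIntegrable.add (hX : mIntegrable μ X) (hY : mIntegrable μ Y) :
    mIntegrable μ (fun ω => X ω + Y ω) :=
  fun i j => (hX i j).add (hY i j)

lemma mIntegral_add (hX : mIntegrable μ X) (hY : mIntegrable μ Y) :
    mIntegral μ (fun ω => X ω + Y ω) = mIntegral μ X + mIntegral μ Y := by
  ext i j
  exact integral_add (hX i j) (hY i j)

lemma mIntegral_sub (hX : mIntegrable μ X) (hY : mIntegrable μ Y) :
    mIntegral μ (fun ω => X ω - Y ω) = mIntegral μ X - mIntegral μ Y := by
  ext i j
  exact integral_sub (hX i j) (hY i j)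

lemma mIntegral_sub_const [IsProbabilityMeasure μ] (hX : mIntegrable μ X)
    (A : Matrix (Fin d) (Fin d) ℝ) : mIntegral μ (fun ω => X ω - A) = mIntegral μ X - A := by
  ext i j
  simp [mIntegral, integral_sub (hX i j) (integrable_const (A i j))]

lemma mIntegrable_of_memLp [IsFiniteMeasure μ] (hX : ∀ i j, MemLp (fun ω => X ω i j) 2 μ) :
    mIntegrable μ X :=
  fun i j => (hX i j).integrable one_le_two

lemma mIntegrable_mul_of_memLp (hX : ∀ i j, MemLp (fun ω => X ω i j) 2 μ)
    (hY : ∀ i j, MemLp (fun ω => Y ω i j) 2 μ) : mIntegrable μ (fun ω => X ω * Y ω) := by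
  intro i j
  simp only [Matrix.mul_apply]
  exact integrable_finsetSum _ fun k _ => (hX i k).integrable_mul (hY k j)

lemma mIntegral_mul_of_indepFun (hXY : IndepFun X Y μ) (hX : mIntegrable μ X)
    (hY : mIntegrable μ Y) :
    mIntegral μ (fun ω => X ω * Y ω) = mIntegral μ X * mIntegral μ Y := by
  ext i j
  have hentry (k : Fin d) : IndepFun (fun ω => X ω i k) (fun ω => Y ω k j) μ :=
    hXY.comp (φ := fun A : Matrix (Fin d) (Fin d) ℝ => A i k)
      (ψ := fun A : Matrix (Fin d) (Fin d) ℝ => A k j) (by fun_prop) (by fun_prop)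
  simp only [mIntegral, Matrix.mul_apply]
  rw [integral_finsetSum (f := fun k ω => X ω i k * Y ω k j) _
    fun k _ => (hentry k).integrable_mul (hX i k) (hY k j)]
  exact Finset.sum_congr rfl fun k _ => (hentry k).integral_mul_eq_mul_integral
    (hX i k).aestronglyMeasurable (hY k j).aestronglyMeasurable

lemma mIntegral_sq_sub_of_indepFun [IsProbabilityMeasure μ] (hXY : IndepFun X Y μ)
    (hid : IdentDistrib X Y μ μ) (hX : ∀ i j, MemLp (fun ω => X ω i j) 2 μ) :
    mIntegral μ (fun ω => (X ω - Y ω) ^ 2)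
      = 2 • mIntegral μ (fun ω => (X ω - mIntegral μ X) ^ 2) := by
  set M := mIntegral μ X
  set F := fun ω => X ω - M
  set G := fun ω => Y ω - M
  have hY (i j : Fin d) : MemLp (fun ω => Y ω i j) 2 μ := (hid.entry i j).memLp_snd (hX i j)
  have hF (i j : Fin d) : MemLp (fun ω => F ω i j) 2 μ := (hX i j).sub (memLp_const _)
  have hG (i j : Fin d) : MemLp (fun ω => G ω i j) 2 μ := (hY i j).sub (memLp_const _)
  have hF0 : mIntegral μ F = 0 := by rw [mIntegral_sub_const (mIntegrable_of_memLp hX), sub_self]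
  have hG0 : mIntegral μ G = 0 := by
    rw [mIntegral_sub_const (mIntegrable_of_memLp hY), ← hid.mIntegral_eq, sub_self]
  have hFG : IndepFun F G μ := hXY.comp (φ := (· - M)) (ψ := (· - M)) (by fun_prop) (by fun_prop)
  have hGsq : mIntegral μ (fun ω => G ω * G ω) = mIntegral μ (fun ω => F ω * F ω) :=
    (hid.comp (u := fun A => (A - M) * (A - M)) (by fun_prop)).mIntegral_eq.symm
  have hexpand : (fun ω => (X ω - Y ω) ^ 2)
      = fun ω => (F ω * F ω + G ω * G ω) - (F ω * G ω + G ω * F ω) := by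
    funext ω
    simp only [F, G]
    noncomm_ring
  have hFFi := mIntegrable_mul_of_memLp hF hF
  have hGGi := mIntegrable_mul_of_memLp hG hG
  have hFGi := mIntegrable_mul_of_memLp hF hG
  have hGFi := mIntegrable_mul_of_memLp hG hF
  rw [hexpand, mIntegral_sub (hFFi.add hGGi) (hFGi.add hGFi), mIntegral_add hFFi hGGi,
    mIntegral_add hFGi hGFi,
    mIntegral_mul_of_indepFun hFG (mIntegrable_of_memLp hF) (mIntegrable_of_memLp hG),
    mIntegral_mul_of_indepFun hFG.symm (mIntegrable_of_memLp hG) (mIntegrable_of_memLp hF),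
    hF0, hG0, hGsq, mul_zero, add_zero, sub_zero, two_smul]
  simp only [F, sq]

end MatrixIntegral

/-- `V*_n` for `n = 2k`. -/
noncomputable def pairedVariance {Ω : Type*} {d : ℕ} (X : ℕ → Ω → Matrix (Fin d) (Fin d) ℝ)
    (k : ℕ) (ω : Ω) : Matrix (Fin d) (Fin d) ℝ :=
  (2 * (k : ℝ))⁻¹ • ∑ j ∈ Finset.range k, (X (2 * j) ω - X (2 * j + 1) ω) ^ 2

lemma isHermitian_pairedVariance {Ω : Type*} {d : ℕ} {X : ℕ → Ω → Matrix (Fin d) (Fin d) ℝ}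
    (hX : ∀ i ω, (X i ω).IsHermitian) (k : ℕ) (ω : Ω) : (pairedVariance X k ω).IsHermitian :=
  IsSelfAdjoint.smul (IsSelfAdjoint.all _) (isSelfAdjoint_sum _ fun j _ =>
    ((hX (2 * j) ω).sub (hX (2 * j + 1) ω)).pow 2)

section PairedVariance

variable {Ω : Type*} [MeasurableSpace Ω] {μ : Measure Ω} {d : ℕ}

theorem strong_law_ae_matrix {Y : ℕ → Ω → Matrix (Fin d) (Fin d) ℝ} (hint : mIntegrable μ (Y 0))
    (hindep : Pairwise fun j l => IndepFun (Y j) (Y l) μ)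
    (hident : ∀ j, IdentDistrib (Y j) (Y 0) μ μ) :
    ∀ᵐ ω ∂μ, Tendsto (fun k : ℕ => (k : ℝ)⁻¹ • ∑ j ∈ Finset.range k, Y j ω) atTop
      (𝓝 (mIntegral μ (Y 0))) := by
  have h := ae_all_iff.2 fun ij : Fin d × Fin d =>
    strong_law_ae_real (fun j ω => Y j ω ij.1 ij.2) (hint ij.1 ij.2)
      (fun j l hjl => (hindep hjl).comp (φ := fun A : Matrix (Fin d) (Fin d) ℝ => A ij.1 ij.2)
        (ψ := fun A : Matrix (Fin d) (Fin d) ℝ => A ij.1 ij.2) (by fun_prop) (by fun_prop))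
      (fun j => (hident j).entry ij.1 ij.2)
  filter_upwards [h] with ω hω
  refine tendsto_pi_nhds.2 fun i => tendsto_pi_nhds.2 fun j => ?_
  simpa [Matrix.sum_apply, div_eq_inv_mul, mIntegral] using hω (i, j)

theorem ae_tendsto_pairedVariance [IsProbabilityMeasure μ] {X : ℕ → Ω → Matrix (Fin d) (Fin d) ℝ}
    (hMeas : ∀ i, Measurable (X i)) (hIndep : iIndepFun X μ)
    (hIdent : ∀ i, IdentDistrib (X i) (X 0) μ μ) (hX : ∀ i j, MemLp (fun ω => X 0 ω i j) 2 μ) :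
    ∀ᵐ ω ∂μ, Tendsto (fun k => pairedVariance X k ω) atTop
      (𝓝 (mIntegral μ (fun ω => (X 0 ω - mIntegral μ (X 0)) ^ 2))) := by
  set Y : ℕ → Ω → Matrix (Fin d) (Fin d) ℝ := fun j ω => (X (2 * j) ω - X (2 * j + 1) ω) ^ 2
  have hφ : Measurable fun p : Matrix (Fin d) (Fin d) ℝ × Matrix (Fin d) (Fin d) ℝ =>
      (p.1 - p.2) ^ 2 := by fun_prop
  have hindep : Pairwise fun j l => IndepFun (Y j) (Y l) μ := fun j l hjl =>
    (hIndep.indepFun_prodMk_prodMk hMeas (2 * j) (2 * j + 1) (2 * l) (2 * l + 1)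
      (by omega) (by omega) (by omega) (by omega)).comp hφ hφ
  have hident (j : ℕ) : IdentDistrib (Y j) (Y 0) μ μ :=
    ((hIdent (2 * j)).prodMk ((hIdent (2 * j + 1)).trans (hIdent 1).symm)
      (hIndep.indepFun (by omega)) (hIndep.indepFun zero_ne_one)).comp hφ
  have hX1 : ∀ i j, MemLp (fun ω => X 1 ω i j) 2 μ := fun i j =>
    ((hIdent 1).symm.entry i j).memLp_snd (hX i j)
  have hdiff : ∀ i j, MemLp (fun ω => (X 0 ω - X 1 ω) i j) 2 μ := fun i j => (hX i j).sub (hX1 i j)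
  have hint : mIntegrable μ (Y 0) := by
    simpa only [Y, sq] using mIntegrable_mul_of_memLp hdiff hdiff
  have hmean : mIntegral μ (Y 0) = 2 • mIntegral μ (fun ω => (X 0 ω - mIntegral μ (X 0)) ^ 2) :=
    mIntegral_sq_sub_of_indepFun (hIndep.indepFun zero_ne_one) (hIdent 1).symm hX
  filter_upwards [strong_law_ae_matrix hint hindep hident] with ω hω
  rw [hmean] at hω
  have hpaired : (fun k => pairedVariance X k ω)
      = fun k : ℕ => (2⁻¹ : ℝ) • (k : ℝ)⁻¹ • ∑ j ∈ Finset.range k, Y j ω := by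
    funext k
    rw [pairedVariance, mul_inv, smul_smul]
  have hhalf (A : Matrix (Fin d) (Fin d) ℝ) : (2⁻¹ : ℝ) • 2 • A = A := by module
  simpa only [hpaired, hhalf] using hω.const_smul (2⁻¹ : ℝ)

end PairedVariance

section Deviation

open Real

/-- The deviation `D_n` of the first matrix empirical Bernstein inequality, with `v` standing for
`‖V*_n‖`. -/
noncomputable def bernsteinDeviation (d α n v : ℝ) : ℝ :=
  log (n * d / ((n - 1) * α)) / (3 * n) + √(2 * v * log (n * d / ((n - 1) * α)) / n)
    + (√(5 / 3) + 1) * √(log (n * d / ((n - 1) * α)) * log (2 * n * d / α)) / n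

lemma tendsto_mul_div_sub_one_mul (c α : ℝ) :
    Tendsto (fun x : ℝ => x * c / ((x - 1) * α)) atTop (𝓝 (c / α)) := by
  have h : Tendsto (fun x : ℝ => c / α / (1 - x⁻¹)) atTop (𝓝 (c / α / (1 - 0))) :=
    tendsto_const_nhds.div (tendsto_const_nhds.sub tendsto_inv_atTop_zero) (by norm_num)
  rw [sub_zero, div_one] at h
  refine h.congr' ((eventually_gt_atTop 1).mono fun x hx => ?_)
  have : x - 1 ≠ 0 := by linarith
  field_simp

lemma tendsto_log_mul_div_self {c : ℝ} (hc : 0 < c) :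
    Tendsto (fun x : ℝ => log (c * x) / x) atTop (𝓝 0) := by
  have h := (isLittleO_log_id_atTop.tendsto_div_nhds_zero.comp
    (tendsto_id.const_mul_atTop hc)).const_mul c
  rw [mul_zero] at h
  refine h.congr' ((eventually_gt_atTop 0).mono fun x hx => ?_)
  simp only [Function.comp_apply, id]
  field_simp

variable {ι : Type*} {l : Filter ι} {n : ι → ℝ}

lemma tendsto_sqrt_mul_div_self_zero (hn : Tendsto n l atTop) {a : ι → ℝ} {A : ℝ}
    (ha : Tendsto a l (𝓝 A)) : Tendsto (fun i => √(n i) * (a i / n i)) l (𝓝 0) := by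
  have h := ha.mul (tendsto_inv_atTop_zero.comp (tendsto_sqrt_atTop.comp hn))
  rw [mul_zero] at h
  refine h.congr' ((hn.eventually_gt_atTop 0).mono fun i hi => ?_)
  simp only [Function.comp_apply]
  rw [mul_div_left_comm, sqrt_div_self', one_div, mul_comm]

lemma tendsto_sqrt_mul_bernsteinDeviation {d α v₀ : ℝ} (hd : 0 < d) (hα : 0 < α)
    (hn : Tendsto n l atTop) {v : ι → ℝ} (hv : Tendsto v l (𝓝 v₀)) :
    Tendsto (fun i => √(n i) * bernsteinDeviation d α (n i) (v i)) l
      (𝓝 (√(2 * log (d / α) * v₀))) := by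
  set L := fun i => log (n i * d / ((n i - 1) * α))
  have hL : Tendsto L l (𝓝 (log (d / α))) :=
    ((continuousAt_log (div_pos hd hα).ne').tendsto.comp (tendsto_mul_div_sub_one_mul d α)).comp hn
  have hLL : Tendsto (fun i => log (2 * n i * d / α) / n i) l (𝓝 0) := by
    refine ((tendsto_log_mul_div_self (by positivity : 0 < 2 * d / α)).comp hn).congr fun i => ?_
    simp only [Function.comp_apply]
    ring_nf
  have h₁ : Tendsto (fun i => √(n i) * (L i / (3 * n i))) l (𝓝 0) := by
    simpa only [div_mul_eq_div_div] using tendsto_sqrt_mul_div_self_zero hn (hL.div_const 3)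
  have h₂ : Tendsto (fun i => √(n i) * √(2 * v i * L i / n i)) l (𝓝 (√(2 * log (d / α) * v₀))) := by
    rw [mul_right_comm]
    refine ((continuous_sqrt.tendsto _).comp ((hv.const_mul 2).mul hL)).congr'
      ((hn.eventually_gt_atTop 0).mono fun i hi => ?_)
    dsimp only [Function.comp_apply]
    rw [← sqrt_mul hi.le, mul_div_cancel₀ _ hi.ne']
  have h₃ : Tendsto (fun i => √(n i) * ((√(5 / 3) + 1) * √(L i * log (2 * n i * d / α)) / n i)) l
      (𝓝 0) := by
    have h := ((continuous_sqrt.tendsto _).comp (hL.mul hLL)).const_mul (√(5 / 3) + 1)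
    rw [mul_zero, sqrt_zero, mul_zero] at h
    refine h.congr' ((hn.eventually_gt_atTop 0).mono fun i hi => ?_)
    dsimp only [Function.comp_apply]
    rw [← mul_div_assoc, sqrt_div' _ hi.le, mul_div_left_comm _ _ (n i), sqrt_div_self',
      mul_one_div, mul_div_assoc']
  simpa only [bernsteinDeviation, mul_add, zero_add, add_zero] using (h₁.add h₂).add h₃

end Deviation

/-- **Sharpness of the first matrix empirical Bernstein inequality.**
For an i.i.d. sequence of `S_d^{[0,1]}`-valued random matrices with mean `M` and
variance `V`, writing `n = 2k` and letting `D_n` be the deviation term of the first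
matrix empirical Bernstein inequality (built from the paired sample variance),
`√n · D_n → √(2 log(d/α) ‖V‖)` almost surely along even `n`. -/
theorem matrix_empirical_bernstein_one_sharp
    {Ω : Type*} [m0 : MeasurableSpace Ω] (μ : Measure Ω) [IsProbabilityMeasure μ]
    {d : ℕ} (hd : 0 < d)
    (X : ℕ → Ω → Matrix (Fin d) (Fin d) ℝ)
    (hMeas : ∀ i, Measurable (X i))
    (hIndep : iIndepFun (m := fun _ : ℕ => matMS) X μ)
    (hIdent : ∀ i, IdentDistrib (X i) (X 0) μ μ)
    (hBdd : ∀ i, ∀ ω, memSd01 (X i ω))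
    (M V : Matrix (Fin d) (Fin d) ℝ)
    (hMean : mIntegral μ (X 0) = M)
    (hVar : mIntegral μ (fun ω => (X 0 ω - M) ^ 2) = V)
    (α : ℝ) (hα : α ∈ Set.Ioo (0 : ℝ) 1) :
    ∀ᵐ ω ∂μ, Tendsto (fun k : ℕ =>
        Real.sqrt (2 * (k : ℝ)) *
          (Real.log (2 * (k : ℝ) * d / ((2 * (k : ℝ) - 1) * α)) / (3 * (2 * (k : ℝ)))
          + Real.sqrt (2 * specNorm ((2 * (k : ℝ))⁻¹ •
                ∑ j ∈ Finset.range k, (X (2 * j) ω - X (2 * j + 1) ω) ^ 2)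
              * Real.log (2 * (k : ℝ) * d / ((2 * (k : ℝ) - 1) * α)) / (2 * (k : ℝ)))
          + (Real.sqrt (5 / 3) + 1)
              * Real.sqrt (Real.log (2 * (k : ℝ) * d / ((2 * (k : ℝ) - 1) * α))
                  * Real.log (2 * (2 * (k : ℝ)) * d / α)) / (2 * (k : ℝ))))
      atTop (nhds (Real.sqrt (2 * Real.log (d / α) * specNorm V))) := by
  have hX0 (i j : Fin d) : MemLp (fun ω => X 0 ω i j) 2 μ :=
    MemLp.of_bound (by fun_prop) 1
      (ae_of_all _ fun ω => by simpa using (hBdd 0 ω).abs_apply_le_one i j)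
  filter_upwards [ae_tendsto_pairedVariance hMeas hIndep hIdent hX0] with ω hω
  rw [hMean, hVar] at hω
  exact tendsto_sqrt_mul_bernsteinDeviation (Nat.cast_pos.2 hd) hα.1
    (tendsto_natCast_atTop_atTop.const_mul_atTop two_pos)
    (hω.specNorm (.of_forall (isHermitian_pairedVariance (fun i ω => (hBdd i ω).1.1) · ω)))
end

section
/- Let X_1, X_2, ... be i.i.d. [0,1]-valued random variables with mean μ and variance σ², and let α ∈ (0,1). For each n ≥ 2 let X̄_n = (1/n) Σ_{i=1}^n X_i, σ̂_n² = (1/(n−1)) Σ_{i=1}^n (X_i − X̄_n)², and ρ_n = log(n/((n−1)α))/(3n) + sqrt( 2·σ̂_n²·log(n/((n−1)α)) / n ) + 2·sqrt( log(n/((n−1)α)) · log(n/α) / (n(n−1)) ). Then sqrt(n)·ρ_n converges almost surely to sqrt( 2·σ²·log(1/α) ) as n → ∞. -/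
open MeasureTheory ProbabilityTheory Filter Matrix

/-
Write σ̂_n² = n/(n-1) · (mean of X_i² − (mean of X_i)²). By the strong law of large numbers,
applied to the X_i and to the X_i², both empirical means converge almost surely, so σ̂_n² → σ².
Multiplying ρ_n by √n, the first term is O(log(1/α)/√n), the last is O(√(log n / n)), and the
middle one equals √(2 σ̂_n² log(n/((n-1)α))) → √(2 σ² log(1/α)).
-/

open Finset Real Topology

noncomputable def sampleVariance (x : ℕ → ℝ) (n : ℕ) : ℝ :=
  ((n : ℝ) - 1)⁻¹ * ∑ i ∈ range n, (x i - (n : ℝ)⁻¹ * ∑ j ∈ range n, x j) ^ 2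

/-- The radius `ρ_n`, with the sample variance `σ̂_n²` left as a parameter `v`. -/
noncomputable def maurerPontilRadius (α v : ℝ) (n : ℕ) : ℝ :=
  log ((n : ℝ) / (((n : ℝ) - 1) * α)) / (3 * n)
    + √(2 * v * log ((n : ℝ) / (((n : ℝ) - 1) * α)) / n)
    + 2 * √(log ((n : ℝ) / (((n : ℝ) - 1) * α)) * log ((n : ℝ) / α) / (n * ((n : ℝ) - 1)))

theorem Finset.sum_sq_sub_mean {ι : Type*} (s : Finset ι) (x : ι → ℝ) :
    ∑ i ∈ s, (x i - (#s : ℝ)⁻¹ * ∑ j ∈ s, x j) ^ 2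
      = ∑ i ∈ s, x i ^ 2 - (∑ i ∈ s, x i) ^ 2 / #s := by
  rcases s.eq_empty_or_nonempty with rfl | hs
  · simp
  have hcard : (#s : ℝ) ≠ 0 := by exact_mod_cast hs.card_pos.ne'
  simp only [sub_sq, sum_add_distrib, sum_sub_distrib, ← sum_mul, ← mul_sum, sum_const,
    nsmul_eq_mul]
  field_simp
  ring

theorem sampleVariance_eq (x : ℕ → ℝ) (n : ℕ) :
    sampleVariance x n
      = (n : ℝ) / ((n : ℝ) - 1)
          * ((∑ i ∈ range n, x i ^ 2) / n - ((∑ i ∈ range n, x i) / n) ^ 2) := by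
  have h := sum_sq_sub_mean (range n) x
  rw [card_range] at h
  rw [sampleVariance, h]
  obtain rfl | hn := eq_or_ne n 0
  · simp
  have hn' : (n : ℝ) ≠ 0 := Nat.cast_ne_zero.2 hn
  field_simp

theorem ae_tendsto_sampleVariance {Ω : Type*} [MeasurableSpace Ω] {μ : Measure Ω}
    [IsProbabilityMeasure μ] (X : ℕ → Ω → ℝ) (hX : MemLp (X 0) 2 μ)
    (hindep : Pairwise (Function.onFun (IndepFun · · μ) X))
    (hident : ∀ i, IdentDistrib (X i) (X 0) μ μ) :
    ∀ᵐ ω ∂μ, Tendsto (fun n => sampleVariance (X · ω) n) atTop (𝓝 (variance (X 0) μ)) := by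
  have hsq : Measurable fun x : ℝ => x ^ 2 := measurable_id.pow_const 2
  have hmean := strong_law_ae_real X (hX.integrable one_le_two) hindep hident
  have hmean_sq := strong_law_ae_real (fun i ω => X i ω ^ 2) hX.integrable_sq
    (fun i j hij => (hindep hij).comp hsq hsq) (fun i => (hident i).comp hsq)
  filter_upwards [hmean, hmean_sq] with ω hω hω_sq
  have hlim := (tendsto_natCast_div_add_atTop (-1 : ℝ)).mul (hω_sq.sub (hω.pow 2))
  rw [variance_eq_sub hX]
  simpa only [sampleVariance_eq, Pi.pow_apply, one_mul, ← sub_eq_add_neg] using hlim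

theorem tendsto_log_natCast_div_div_natCast_sub_one {α : ℝ} (hα : α ≠ 0) :
    Tendsto (fun n : ℕ => log ((n : ℝ) / α) / ((n : ℝ) - 1)) atTop (𝓝 0) := by
  have hlog : Tendsto (fun x : ℝ => log x / (x - 1)) atTop (𝓝 0) := by
    simpa [sub_eq_add_neg] using tendsto_pow_log_div_mul_add_atTop 1 (-1) 1 one_ne_zero
  have hconst : Tendsto (fun n : ℕ => log α / ((n : ℝ) - 1)) atTop (𝓝 0) :=
    tendsto_const_nhds.div_atTop
      (tendsto_atTop_add_const_right _ _ tendsto_natCast_atTop_atTop)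
  have h := (hlog.comp tendsto_natCast_atTop_atTop).sub hconst
  rw [sub_zero] at h
  refine h.congr' ?_
  filter_upwards [eventually_ne_atTop 0] with n hn
  simp [log_div (Nat.cast_ne_zero.2 hn) hα, sub_div]

theorem tendsto_log_natCast_div_natCast_sub_one_mul {α : ℝ} (hα : α ≠ 0) :
    Tendsto (fun n : ℕ => log ((n : ℝ) / (((n : ℝ) - 1) * α))) atTop (𝓝 (log (1 / α))) := by
  have h := (tendsto_natCast_div_add_atTop (-1 : ℝ)).div_const α
  simp only [div_div, ← sub_eq_add_neg] at h
  exact ((continuousAt_log (one_div_ne_zero hα)).tendsto.comp h)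

theorem sqrt_mul_maurerPontilRadius (α v : ℝ) {n : ℕ} (hn : 2 ≤ n) :
    √n * maurerPontilRadius α v n
      = log ((n : ℝ) / (((n : ℝ) - 1) * α)) / (3 * √n)
        + √(2 * v * log ((n : ℝ) / (((n : ℝ) - 1) * α)))
        + 2 * √(log ((n : ℝ) / (((n : ℝ) - 1) * α)) * (log ((n : ℝ) / α) / ((n : ℝ) - 1))) := by
  have hn1 : (1 : ℝ) < n := by exact_mod_cast hn
  have hsqrt : √(n : ℝ) ^ 2 = n := sq_sqrt (by linarith)
  have hsub : (n : ℝ) - 1 ≠ 0 := by linarith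
  have hcancel : ∀ a : ℝ, √n * √(a / n) = √a := fun a => by
    rw [← sqrt_mul (by linarith), mul_div_cancel₀ _ (by linarith)]
  have hfirst : ∀ a : ℝ, √n * (a / (3 * n)) = a / (3 * √n) := fun a => by
    field_simp
    rw [hsqrt, mul_comm]
  have hlast : ∀ a b : ℝ, a * b / (n * ((n : ℝ) - 1)) = a * (b / ((n : ℝ) - 1)) / n :=
    fun a b => by field_simp
  rw [maurerPontilRadius, mul_add, mul_add, hfirst, hcancel, mul_left_comm, hlast, hcancel]

theorem tendsto_sqrt_mul_maurerPontilRadius {α σ2 : ℝ} (hα : α ≠ 0) {v : ℕ → ℝ}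
    (hv : Tendsto v atTop (𝓝 σ2)) :
    Tendsto (fun n : ℕ => √n * maurerPontilRadius α (v n) n) atTop
      (𝓝 (√(2 * σ2 * log (1 / α)))) := by
  have hL := tendsto_log_natCast_div_natCast_sub_one_mul hα
  have hsqrt : Tendsto (fun n : ℕ => 3 * √(n : ℝ)) atTop atTop :=
    (tendsto_sqrt_atTop.comp tendsto_natCast_atTop_atTop).const_mul_atTop three_pos
  have hfirst := hL.div_atTop hsqrt
  have hmiddle := ((tendsto_const_nhds (x := (2 : ℝ))).mul hv |>.mul hL).sqrt
  have hlast := ((hL.mul (tendsto_log_natCast_div_div_natCast_sub_one hα)).sqrt).const_mul 2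
  rw [mul_zero, sqrt_zero, mul_zero] at hlast
  have h := (hfirst.add hmiddle).add hlast
  rw [zero_add, add_zero] at h
  refine h.congr' ?_
  filter_upwards [eventually_ge_atTop 2] with n hn
  rw [sqrt_mul_maurerPontilRadius α (v n) hn]

/-- **Sharpness of the sharpened Maurer–Pontil inequality.**
For an i.i.d. sequence of `[0,1]`-valued random variables with mean `μ₀` and variance
`σ²`, the deviation term `ρ_n` of the sharpened Maurer–Pontil empirical Bernstein
inequality satisfies `√n · ρ_n → √(2 σ² log(1/α))` almost surely. -/
theorem sharp_maurer_pontil_sharp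
    {Ω : Type*} [m0 : MeasurableSpace Ω] (μ : Measure Ω) [IsProbabilityMeasure μ]
    (X : ℕ → Ω → ℝ)
    (hMeas : ∀ i, Measurable (X i))
    (hIndep : iIndepFun X μ)
    (hIdent : ∀ i, IdentDistrib (X i) (X 0) μ μ)
    (hBdd : ∀ i, ∀ ω, X i ω ∈ Set.Icc (0 : ℝ) 1)
    (μ₀ σ2 : ℝ)
    (hMean : ∫ ω, X 0 ω ∂μ = μ₀)
    (hVar : ∫ ω, (X 0 ω - μ₀) ^ 2 ∂μ = σ2)
    (α : ℝ) (hα : α ∈ Set.Ioo (0 : ℝ) 1) :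
    ∀ᵐ ω ∂μ, Tendsto (fun n : ℕ =>
        Real.sqrt n *
          (Real.log ((n : ℝ) / (((n : ℝ) - 1) * α)) / (3 * n)
          + Real.sqrt (2 * (((n : ℝ) - 1)⁻¹ * ∑ i ∈ Finset.range n,
                (X i ω - (n : ℝ)⁻¹ * ∑ j ∈ Finset.range n, X j ω) ^ 2)
              * Real.log ((n : ℝ) / (((n : ℝ) - 1) * α)) / n)
          + 2 * Real.sqrt (Real.log ((n : ℝ) / (((n : ℝ) - 1) * α))
              * Real.log ((n : ℝ) / α) / (n * ((n : ℝ) - 1)))))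
      atTop (nhds (Real.sqrt (2 * σ2 * Real.log (1 / α)))) := by
  obtain ⟨hα0, -⟩ := hα
  have hX : MemLp (X 0) 2 μ :=
    memLp_of_bounded (Eventually.of_forall (hBdd 0)) (hMeas 0).aestronglyMeasurable 2
  have hσ2 : variance (X 0) μ = σ2 := by
    rw [variance_eq_integral (hMeas 0).aemeasurable, hMean, hVar]
  have hvar := ae_tendsto_sampleVariance X hX (fun i j hij => hIndep.indepFun hij) hIdent
  filter_upwards [hvar] with ω hω
  exact tendsto_sqrt_mul_maurerPontilRadius hα0.ne' (hσ2 ▸ hω)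
end
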